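/- Let G be a finite simple graph whose degree sequence admits a connected realization, i.e., there exists a connected simple graph G'' on the same vertex set with d(G'') = d(G). Then there exists a finite sequence of two-switches transforming G into a connected simple graph with the same degree sequence. -/

import Mathlib

/-- `TwoSwitch G G'` holds when `G'` is obtained from `G` by a single
two-switch: for distinct vertices `a, b, c, d` with `{a,b}, {c,d}` edges of `G`
and `{a,d}, {b,c}` non-edges of `G`, the edges `{a,b}`, `{c,d}` are replaced by
`{a,d}`, `{b,c}`. -/
def TwoSwitch {V : Type*} (G G' : SimpleGraph V) : Prop :=
  ∃ a b c d : V, a ≠ b ∧ a ≠ c ∧ a ≠ d ∧ b ≠ c ∧ b ≠ d ∧ c ≠ d ∧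
    G.Adj a b ∧ G.Adj c d ∧ ¬ G.Adj a d ∧ ¬ G.Adj b c ∧
    G' = SimpleGraph.fromEdgeSet
      ((G.edgeSet \ {s(a, b), s(c, d)}) ∪ {s(a, d), s(b, c)})

/-!
Any two realizations `G`, `H` of one degree sequence are joined by two-switches; take `H`
connected. Fix a vertex `w`. If `y` is a neighbour of `w` in `G` but not
in `H` and `x` the other way round, then in the graph where `deg y ≤ deg x` (say `G`) some
neighbour `z ≠ y` of `x` is not adjacent to `y`, and the two-switch `wy, xz ↦ wx, yz` brings the
neighbourhood of `w` closer to that in `H`. Once the neighbourhoods of `w` agree, delete the edges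
at `w` and recurse on graphs of smaller support: switches of the remainder never touch `w`, so
they lift back to the original graphs.
-/

section

open scoped symmDiff

open SimpleGraph Relation

namespace Set

variable {α : Type*} [Finite α] {s t : Set α}

lemma sdiff_nonempty_of_ncard_le_of_ne (h : t.ncard ≤ s.ncard) (hne : s ≠ t) :
    (s \ t).Nonempty := by
  rw [nonempty_iff_ne_empty, Ne, sdiff_eq_empty]
  exact fun hst => hne (eq_of_subset_of_ncard_le hst h)

lemma ncard_symmDiff_insert_sdiff_singleton_lt {x y : α} (hx : x ∈ t \ s) (hy : y ∈ s \ t) :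
    (insert x (s \ {y}) ∆ t).ncard < (s ∆ t).ncard := by
  refine ncard_lt_ncard ⟨fun e he => ?_, fun hsub => ?_⟩
  · simp only [mem_symmDiff, mem_insert_iff, mem_sdiff, mem_singleton_iff] at hx hy he ⊢
    grind
  · have hxy : y ≠ x := by rintro rfl; exact hx.2 hy.1
    simpa [mem_symmDiff, hxy, hy.2] using hsub (Or.inl hy)

end Set

variable {V : Type*}

namespace SimpleGraph

def switch (G : SimpleGraph V) (a b c d : V) : SimpleGraph V :=
  fromEdgeSet ((G.edgeSet \ {s(a, b), s(c, d)}) ∪ {s(a, d), s(b, c)})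

variable {G : SimpleGraph V} {a b c d : V}

lemma edgeSet_switch (had : a ≠ d) (hbc : b ≠ c) :
    (G.switch a b c d).edgeSet = (G.edgeSet \ {s(a, b), s(c, d)}) ∪ {s(a, d), s(b, c)} := by
  rw [switch, edgeSet_fromEdgeSet, sdiff_eq_left, Set.disjoint_left]
  rintro e (⟨he, -⟩ | rfl | rfl)
  · exact G.not_isDiag_of_mem_edgeSet he
  · exact Sym2.mk_isDiag_iff.not.mpr had
  · exact Sym2.mk_isDiag_iff.not.mpr hbc

lemma switch_adj (had : a ≠ d) (hbc : b ≠ c) {x y : V} :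
    (G.switch a b c d).Adj x y ↔
      (G.Adj x y ∧ s(x, y) ≠ s(a, b) ∧ s(x, y) ≠ s(c, d)) ∨
        s(x, y) = s(a, d) ∨ s(x, y) = s(b, c) := by
  rw [← mem_edgeSet, edgeSet_switch had hbc]
  simp only [Set.mem_union, Set.mem_sdiff, mem_edgeSet, Set.mem_insert_iff,
    Set.mem_singleton_iff, not_or]

lemma switch_swap (G : SimpleGraph V) (a b c d : V) : G.switch b a d c = G.switch a b c d := by
  rw [switch, switch, Sym2.eq_swap (a := b), Sym2.eq_swap (a := d), Set.pair_comm s(b, c)]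

lemma switch_rotate (G : SimpleGraph V) (a b c d : V) :
    G.switch c d a b = G.switch a b c d := by
  rw [switch, switch, Set.pair_comm s(c, d), Sym2.eq_swap (a := c) (b := b),
    Sym2.eq_swap (a := d) (b := a), Set.pair_comm s(b, c)]

lemma neighborSet_switch_left (hab : a ≠ b) (hac : a ≠ c) (had : a ≠ d) (hbc : b ≠ c) :
    (G.switch a b c d).neighborSet a = insert d (G.neighborSet a \ {b}) := by
  ext v
  simp only [mem_neighborSet, switch_adj had hbc, ne_eq, Set.mem_insert_iff, Set.mem_sdiff,
    Set.mem_singleton_iff, Sym2.eq_iff, hab, hac, had]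
  tauto

lemma neighborSet_switch_of_ne (had : a ≠ d) (hbc : b ≠ c) {x : V}
    (hxa : x ≠ a) (hxb : x ≠ b) (hxc : x ≠ c) (hxd : x ≠ d) :
    (G.switch a b c d).neighborSet x = G.neighborSet x := by
  ext v
  simp only [mem_neighborSet, switch_adj had hbc, ne_eq, Sym2.eq_iff, hxa, hxb, hxc, hxd]
  tauto

variable {H : SimpleGraph V} {v w : V}

lemma neighborSet_deleteIncidenceSet_self : (G.deleteIncidenceSet w).neighborSet w = ∅ := by
  ext u
  simp [deleteIncidenceSet_adj]

lemma neighborSet_deleteIncidenceSet_of_ne (hvw : v ≠ w) :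
    (G.deleteIncidenceSet w).neighborSet v = G.neighborSet v \ {w} := by
  ext u
  simp [deleteIncidenceSet_adj, hvw]

lemma deleteIncidenceSet_sup_fromEdgeSet_incidenceSet (G : SimpleGraph V) (w : V) :
    G.deleteIncidenceSet w ⊔ fromEdgeSet (G.incidenceSet w) = G :=
  sdiff_sup_cancel ((fromEdgeSet_le G).mpr (Set.sdiff_subset.trans (G.incidenceSet_subset w)))

lemma incidenceSet_eq_of_neighborSet_eq (h : G.neighborSet w = H.neighborSet w) :
    G.incidenceSet w = H.incidenceSet w := by
  have hadj (u : V) : G.Adj w u ↔ H.Adj w u := Set.ext_iff.mp h u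
  ext e
  induction e using Sym2.ind with | _ u v => ?_
  by_cases hu : w = u
  · subst hu
    simp [hadj]
  by_cases hv : w = v
  · subst hv
    simp [mk'_mem_incidenceSet_iff, G.adj_comm _ w, H.adj_comm _ w, hadj]
  simp [mk'_mem_incidenceSet_iff, hu, hv]

lemma ncard_neighborSet_eq_degree (G : SimpleGraph V) (v : V)
    [Fintype (G.neighborSet v)] : (G.neighborSet v).ncard = G.degree v := by
  rw [← Nat.card_coe_set_eq, Nat.card_eq_fintype_card, card_neighborSet_eq_degree]

lemma support_eq_of_ncard_neighborSet_eq [Finite V]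
    (h : ∀ v, (G.neighborSet v).ncard = (H.neighborSet v).ncard) : G.support = H.support := by
  ext v
  change (G.neighborSet v).Nonempty ↔ (H.neighborSet v).Nonempty
  rw [← Set.ncard_pos, ← Set.ncard_pos, h]

end SimpleGraph

namespace TwoSwitch

variable {G G' : SimpleGraph V}

lemma ncard_neighborSet_eq [Finite V] (h : TwoSwitch G G') (v : V) :
    (G'.neighborSet v).ncard = (G.neighborSet v).ncard := by
  obtain ⟨a, b, c, d, hab, hac, had, hbc, hbd, hcd, hGab, hGcd, hGad, hGbc, rfl⟩ := h
  change ((G.switch a b c d).neighborSet v).ncard = _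
  by_cases hva : v = a
  · subst hva
    rw [neighborSet_switch_left hab hac had hbc]
    exact Set.ncard_exchange hGad hGab
  by_cases hvb : v = b
  · subst hvb
    rw [← switch_swap, neighborSet_switch_left hab.symm hbd hbc had]
    exact Set.ncard_exchange hGbc hGab.symm
  by_cases hvc : v = c
  · subst hvc
    rw [← switch_rotate, neighborSet_switch_left hcd hac.symm hbc.symm had.symm]
    exact Set.ncard_exchange (fun h => hGbc h.symm) hGcd
  by_cases hvd : v = d
  · subst hvd
    rw [← switch_rotate, ← switch_swap, neighborSet_switch_left hcd.symm hbd.symm had.symm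
      hbc.symm]
    exact Set.ncard_exchange (fun h => hGad h.symm) hGcd.symm
  rw [neighborSet_switch_of_ne had hbc hva hvb hvc hvd]

lemma symm (h : TwoSwitch G G') : TwoSwitch G' G := by
  obtain ⟨a, b, c, d, hab, hac, had, hbc, hbd, hcd, hGab, hGcd, hGad, hGbc, rfl⟩ := h
  have hE : ∀ e, (e = s(a, b) ∨ e = s(c, d) → e ∈ G.edgeSet) ∧
      (e = s(a, d) ∨ e = s(b, c) → e ∉ G.edgeSet) := by
    rintro e
    refine ⟨?_, ?_⟩ <;> rintro (rfl | rfl) <;> assumption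
  change TwoSwitch (G.switch a b c d) G
  refine ⟨a, d, c, b, had, hac, hab, hcd.symm, hbd.symm, hbc.symm, ?_, ?_, ?_, ?_, ?_⟩
  · exact (switch_adj had hbc).mpr (Or.inr (Or.inl rfl))
  · exact (switch_adj had hbc).mpr (Or.inr (Or.inr Sym2.eq_swap))
  · simp [switch_adj had hbc, had, hab, hac, hbd]
  · simp [switch_adj had hbc, had.symm, hac.symm, hbd.symm, hcd.symm]
  change G = (G.switch a b c d).switch a d c b
  rw [← edgeSet_inj, edgeSet_switch hab hcd.symm, edgeSet_switch had hbc,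
    Sym2.eq_swap (a := c) (b := b), Sym2.eq_swap (a := d) (b := c)]
  ext e
  have := hE e
  simp only [Set.mem_union, Set.mem_sdiff, Set.mem_insert_iff, Set.mem_singleton_iff]
  tauto

lemma sup {S : SimpleGraph V} (h : TwoSwitch G G')
    (hS : ∀ ⦃u v⦄, S.Adj u v → u ∉ G.support ∨ v ∉ G.support) :
    TwoSwitch (G ⊔ S) (G' ⊔ S) := by
  obtain ⟨a, b, c, d, hab, hac, had, hbc, hbd, hcd, hGab, hGcd, hGad, hGbc, rfl⟩ := h
  have hS' : ∀ ⦃u v⦄, u ∈ G.support → v ∈ G.support → ¬S.Adj u v :=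
    fun u v hu hv huv => (hS huv).elim (· hu) (· hv)
  have ha : a ∈ G.support := ⟨b, hGab⟩
  have hb : b ∈ G.support := ⟨a, hGab.symm⟩
  have hc : c ∈ G.support := ⟨d, hGcd⟩
  have hd : d ∈ G.support := ⟨c, hGcd.symm⟩
  refine ⟨a, b, c, d, hab, hac, had, hbc, hbd, hcd, Or.inl hGab, Or.inl hGcd,
    not_or.mpr ⟨hGad, hS' ha hd⟩, not_or.mpr ⟨hGbc, hS' hb hc⟩, ?_⟩
  change G.switch a b c d ⊔ S = (G ⊔ S).switch a b c d
  have hSe : ∀ e ∈ S.edgeSet, e ≠ s(a, b) ∧ e ≠ s(c, d) := by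
    rintro e he
    constructor <;> rintro rfl
    exacts [hS' ha hb he, hS' hc hd he]
  rw [← edgeSet_inj, edgeSet_sup, edgeSet_switch had hbc, edgeSet_switch had hbc, edgeSet_sup]
  ext e
  have := hSe e
  simp only [Set.mem_union, Set.mem_sdiff, Set.mem_insert_iff, Set.mem_singleton_iff]
  tauto

end TwoSwitch

instance : Std.Symm (TwoSwitch (V := V)) := ⟨fun _ _ => TwoSwitch.symm⟩

namespace Relation.ReflTransGen

variable [Finite V] {G H : SimpleGraph V}

lemma twoSwitch_ncard_neighborSet_eq (h : ReflTransGen TwoSwitch G H) (v : V) :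
    (H.neighborSet v).ncard = (G.neighborSet v).ncard := by
  induction h with
  | refl => rfl
  | tail _ hstep ih => exact (hstep.ncard_neighborSet_eq v).trans ih

lemma twoSwitch_sup {S : SimpleGraph V} (h : ReflTransGen TwoSwitch G H)
    (hS : ∀ ⦃u v⦄, S.Adj u v → u ∉ G.support ∨ v ∉ G.support) :
    ReflTransGen TwoSwitch (G ⊔ S) (H ⊔ S) := by
  induction h with
  | refl => rfl
  | @tail X Y hGX hXY ih =>
    refine ih.tail (hXY.sup ?_)
    rwa [support_eq_of_ncard_neighborSet_eq hGX.twoSwitch_ncard_neighborSet_eq]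

end Relation.ReflTransGen

namespace SimpleGraph

variable [Finite V] {G H : SimpleGraph V} {v w x y : V}

lemma exists_adj_not_adj_of_ncard_neighborSet_le (hwy : G.Adj w y) (hwx : ¬G.Adj w x)
    (hxw : x ≠ w) (hdeg : (G.neighborSet y).ncard ≤ (G.neighborSet x).ncard) :
    ∃ z, z ≠ y ∧ G.Adj x z ∧ ¬G.Adj y z := by
  -- Discounting the edge `xy`, `y` still has at most as many neighbours as `x`, yet `w` is a
  -- neighbour of `y` only.
  have hle : (G.neighborSet y \ {x}).ncard ≤ (G.neighborSet x \ {y}).ncard := by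
    by_cases hxy : G.Adj x y
    · have hx := Set.ncard_sdiff_singleton_add_one (show x ∈ G.neighborSet y from hxy.symm)
      have hy := Set.ncard_sdiff_singleton_add_one (show y ∈ G.neighborSet x from hxy)
      omega
    · rwa [Set.sdiff_singleton_eq_self (show y ∉ G.neighborSet x from hxy),
        Set.sdiff_singleton_eq_self (show x ∉ G.neighborSet y from fun h => hxy h.symm)]
  have hne : G.neighborSet x \ {y} ≠ G.neighborSet y \ {x} := fun h =>
    hwx (h.symm ▸ show w ∈ G.neighborSet y \ {x} from ⟨hwy.symm, hxw.symm⟩).1.symm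
  obtain ⟨z, ⟨hxz, hzy⟩, hz⟩ := Set.sdiff_nonempty_of_ncard_le_of_ne hle hne
  exact ⟨z, hzy, hxz, fun hyz => hz ⟨hyz, hxz.ne'⟩⟩

lemma exists_twoSwitch_neighborSet_eq_insert (hwy : G.Adj w y) (hwx : ¬G.Adj w x)
    (hxw : x ≠ w) (hdeg : (G.neighborSet y).ncard ≤ (G.neighborSet x).ncard) :
    ∃ G', TwoSwitch G G' ∧ G'.neighborSet w = insert x (G.neighborSet w \ {y}) := by
  obtain ⟨z, hzy, hxz, hyz⟩ := exists_adj_not_adj_of_ncard_neighborSet_le hwy hwx hxw hdeg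
  have hwz : w ≠ z := by rintro rfl; exact hwx hxz.symm
  have hyx : y ≠ x := by rintro rfl; exact hwx hwy
  exact ⟨G.switch w y z x, ⟨w, y, z, x, hwy.ne, hwz, hxw.symm, hzy.symm, hyx, hxz.ne',
    hwy, hxz.symm, hwx, hyz, rfl⟩, neighborSet_switch_left hwy.ne hwz hxw.symm hzy.symm⟩

lemma exists_reflTransGen_twoSwitch_neighborSet_eq (w : V)
    (h : ∀ v, (G.neighborSet v).ncard = (H.neighborSet v).ncard) :
    ∃ G₁ H₁, ReflTransGen TwoSwitch G G₁ ∧ ReflTransGen TwoSwitch H H₁ ∧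
      G₁.neighborSet w = H₁.neighborSet w := by
  induction hn : (G.neighborSet w ∆ H.neighborSet w).ncard using Nat.strong_induction_on
    generalizing G H with
  | _ n ih =>
  by_cases heq : G.neighborSet w = H.neighborSet w
  · exact ⟨G, H, .refl, .refl, heq⟩
  obtain ⟨y, hy⟩ := Set.sdiff_nonempty_of_ncard_le_of_ne (h w).ge heq
  obtain ⟨x, hx⟩ := Set.sdiff_nonempty_of_ncard_le_of_ne (h w).le (Ne.symm heq)
  rcases le_total (G.neighborSet y).ncard (G.neighborSet x).ncard with hle | hle
  · obtain ⟨G', hGG', hG'w⟩ :=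
      exists_twoSwitch_neighborSet_eq_insert hy.1 hx.2 hx.1.ne' hle
    have hlt := Set.ncard_symmDiff_insert_sdiff_singleton_lt hx hy
    rw [← hG'w, hn] at hlt
    obtain ⟨G₁, H₁, hG₁, hH₁, hw⟩ :=
      ih _ hlt (fun v => (hGG'.ncard_neighborSet_eq v).trans (h v)) rfl
    exact ⟨G₁, H₁, .head hGG' hG₁, hH₁, hw⟩
  · rw [h, h] at hle
    obtain ⟨H', hHH', hH'w⟩ :=
      exists_twoSwitch_neighborSet_eq_insert hx.1 hy.2 hy.1.ne' hle
    have hlt := Set.ncard_symmDiff_insert_sdiff_singleton_lt hy hx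
    rw [← hH'w, symmDiff_comm _ (G.neighborSet w), symmDiff_comm (H.neighborSet w), hn] at hlt
    obtain ⟨G₁, H₁, hG₁, hH₁, hw⟩ :=
      ih _ hlt (fun v => (h v).trans (hHH'.ncard_neighborSet_eq v).symm) rfl
    exact ⟨G₁, H₁, hG₁, .head hHH' hH₁, hw⟩

lemma ncard_neighborSet_deleteIncidenceSet_eq
    (h : ∀ v, (G.neighborSet v).ncard = (H.neighborSet v).ncard)
    (hw : G.neighborSet w = H.neighborSet w) (v : V) :
    ((G.deleteIncidenceSet w).neighborSet v).ncard
      = ((H.deleteIncidenceSet w).neighborSet v).ncard := by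
  obtain rfl | hvw := eq_or_ne v w
  · simp only [neighborSet_deleteIncidenceSet_self]
  rw [neighborSet_deleteIncidenceSet_of_ne hvw, neighborSet_deleteIncidenceSet_of_ne hvw]
  by_cases hGvw : G.Adj v w
  · have hHvw : H.Adj v w := (show v ∈ H.neighborSet w from hw ▸ hGvw.symm).symm
    have hG := Set.ncard_sdiff_singleton_add_one (show w ∈ G.neighborSet v from hGvw)
    have hH := Set.ncard_sdiff_singleton_add_one (show w ∈ H.neighborSet v from hHvw)
    have := h v
    omega
  · have hHvw : ¬H.Adj v w := fun hH => hGvw (show v ∈ G.neighborSet w from hw ▸ hH.symm).symm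
    rw [Set.sdiff_singleton_eq_self (show w ∉ G.neighborSet v from hGvw),
      Set.sdiff_singleton_eq_self (show w ∉ H.neighborSet v from hHvw), h]

lemma reflTransGen_twoSwitch_of_ncard_neighborSet_eq
    (h : ∀ v, (G.neighborSet v).ncard = (H.neighborSet v).ncard) :
    ReflTransGen TwoSwitch G H := by
  induction hn : G.support.ncard using Nat.strong_induction_on generalizing G H with
  | _ n ih =>
  obtain hG | ⟨w, hw⟩ := G.support.eq_empty_or_nonempty
  · have hH : H.support = ∅ := support_eq_of_ncard_neighborSet_eq h ▸ hG
    rw [support_eq_bot_iff] at hG hH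
    rw [hG, hH]
  obtain ⟨G₁, H₁, hG₁, hH₁, hw₁⟩ := exists_reflTransGen_twoSwitch_neighborSet_eq w h
  have h₁ (v : V) : (G₁.neighborSet v).ncard = (H₁.neighborSet v).ncard := by
    rw [hG₁.twoSwitch_ncard_neighborSet_eq, hH₁.twoSwitch_ncard_neighborSet_eq, h]
  have hG₁supp : G₁.support = G.support :=
    support_eq_of_ncard_neighborSet_eq hG₁.twoSwitch_ncard_neighborSet_eq
  have hsupp : (G₁.deleteIncidenceSet w).support.ncard < n := by
    rw [← hn, ← hG₁supp]
    exact Set.ncard_lt_ncard ((support_deleteIncidenceSet_subset G₁ w).trans_ssubset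
      (Set.sdiff_singleton_ssubset.mpr (hG₁supp ▸ hw)))
  have hdel := ih _ hsupp (ncard_neighborSet_deleteIncidenceSet_eq h₁ hw₁) rfl
  have hlift := hdel.twoSwitch_sup (S := fromEdgeSet (G₁.incidenceSet w)) <| by
    have hw' : w ∉ (G₁.deleteIncidenceSet w).support := fun h =>
      (support_deleteIncidenceSet_subset G₁ w h).2 rfl
    rintro u v ⟨huv, -⟩
    obtain ⟨-, rfl | rfl⟩ := (G₁.mk'_mem_incidenceSet_iff).mp huv
    exacts [Or.inl hw', Or.inr hw']
  rw [deleteIncidenceSet_sup_fromEdgeSet_incidenceSet, incidenceSet_eq_of_neighborSet_eq hw₁,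
    deleteIncidenceSet_sup_fromEdgeSet_incidenceSet] at hlift
  exact hG₁.trans (hlift.trans (symm_of _ hH₁))

end SimpleGraph

end

open scoped Classical in
theorem stmt_11 {V : Type*} [Fintype V] (G : SimpleGraph V)
    (h : ∃ G'' : SimpleGraph V, G''.Connected ∧ ∀ v : V, G''.degree v = G.degree v) :
    ∃ G' : SimpleGraph V, Relation.ReflTransGen TwoSwitch G G' ∧
      G'.Connected ∧ ∀ v : V, G'.degree v = G.degree v := by
  obtain ⟨G'', hconn, hdeg⟩ := h
  refine ⟨G'', SimpleGraph.reflTransGen_twoSwitch_of_ncard_neighborSet_eq fun v => ?_,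
    hconn, hdeg⟩
  rw [SimpleGraph.ncard_neighborSet_eq_degree, SimpleGraph.ncard_neighborSet_eq_degree, hdeg]
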